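/- arXiv:1107.5073 — 7 statements merged into one kernel-verified Lean document; each statement's English description precedes it below -/
import Mathlib

section
/- Let (B_1,B_2,a,b) be a handsaw quiver datum. Then the moment map equation μ = 0 holds if and only if B_{1,i} ∘ (α_i|_z) = (α_{i+1}|_z) ∘ β_i for every 1 ≤ i ≤ n−2 and every z ∈ ℂ. -/
noncomputable section

open LinearMap Module

/-- The chain `B_{1,i-1} ∘ ⋯ ∘ B_{1,j} ∘ a_j : W_j → V_i` (zero/junk when out of range). -/
def AtoV {V W : ℕ → Type*}
    [∀ i, AddCommGroup (V i)] [∀ i, Module ℂ (V i)]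
    [∀ i, AddCommGroup (W i)] [∀ i, Module ℂ (W i)]
    (B1 : ∀ i, V i →ₗ[ℂ] V (i + 1)) (a : ∀ i, W i →ₗ[ℂ] V i) :
    (i j : ℕ) → (W j →ₗ[ℂ] V i)
  | 0, _ => 0
  | i + 1, j =>
    if h : j = i + 1 then cast (by rw [h]) (a j)
    else (B1 i) ∘ₗ (AtoV B1 a i j)

/-- The map `α_i|_z : W_1 ⊕ ⋯ ⊕ W_i ⊕ V_i → V_i`, whose restriction to `W_j` (`j ≤ i`) is
`B_{1,i-1} ∘ ⋯ ∘ B_{1,j} ∘ a_j` and whose restriction to `V_i` is `z·id − B_{2,i}`. -/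
def alphaMap {V W : ℕ → Type*}
    [∀ i, AddCommGroup (V i)] [∀ i, Module ℂ (V i)]
    [∀ i, AddCommGroup (W i)] [∀ i, Module ℂ (W i)]
    (B1 : ∀ i, V i →ₗ[ℂ] V (i + 1)) (B2 : ∀ i, V i →ₗ[ℂ] V i)
    (a : ∀ i, W i →ₗ[ℂ] V i) (i : ℕ) (z : ℂ) :
    ((∀ j : Fin i, W (j.val + 1)) × V i) →ₗ[ℂ] V i :=
  LinearMap.coprod
    (∑ j : Fin i, (AtoV B1 a i (j.val + 1)) ∘ₗ (LinearMap.proj j))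
    (z • LinearMap.id - B2 i)

/-- The map `β_i : W_1 ⊕ ⋯ ⊕ W_i ⊕ V_i → W_1 ⊕ ⋯ ⊕ W_{i+1} ⊕ V_{i+1}`, the identity on each
`W_j` (`j ≤ i`) and `(b_i, B_{1,i})` on `V_i`. -/
def betaMap {V W : ℕ → Type*}
    [∀ i, AddCommGroup (V i)] [∀ i, Module ℂ (V i)]
    [∀ i, AddCommGroup (W i)] [∀ i, Module ℂ (W i)]
    (B1 : ∀ i, V i →ₗ[ℂ] V (i + 1)) (b : ∀ i, V i →ₗ[ℂ] W (i + 1)) (i : ℕ) :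
    ((∀ j : Fin i, W (j.val + 1)) × V i) →ₗ[ℂ]
      ((∀ j : Fin (i + 1), W (j.val + 1)) × V (i + 1)) :=
  LinearMap.prod
    (LinearMap.pi fun j' : Fin (i + 1) =>
      if h : j'.val < i then
        (LinearMap.proj (⟨j'.val, h⟩ : Fin i)) ∘ₗ (LinearMap.fst ℂ _ _)
      else
        cast (by
          have hj : j'.val = i := le_antisymm (Nat.lt_succ_iff.mp j'.isLt) (not_lt.mp h)
          rw [hj]) ((b i) ∘ₗ (LinearMap.snd ℂ (∀ j : Fin i, W (j.val + 1)) (V i))))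
    ((B1 i) ∘ₗ (LinearMap.snd ℂ _ _))

/-- The moment map equation μ = 0. -/
def MomentZero {V W : ℕ → Type*}
    [∀ i, AddCommGroup (V i)] [∀ i, Module ℂ (V i)]
    [∀ i, AddCommGroup (W i)] [∀ i, Module ℂ (W i)]
    (n : ℕ)
    (B1 : ∀ i, V i →ₗ[ℂ] V (i + 1)) (B2 : ∀ i, V i →ₗ[ℂ] V i)
    (a : ∀ i, W i →ₗ[ℂ] V i) (b : ∀ i, V i →ₗ[ℂ] W (i + 1)) : Prop :=
  ∀ i, 1 ≤ i → i ≤ n - 2 →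
    (B1 i) ∘ₗ (B2 i) - (B2 (i + 1)) ∘ₗ (B1 i) + (a (i + 1)) ∘ₗ (b i) = 0

/-- Stability of a handsaw quiver datum. -/
def IsStable {V W : ℕ → Type*}
    [∀ i, AddCommGroup (V i)] [∀ i, Module ℂ (V i)]
    [∀ i, AddCommGroup (W i)] [∀ i, Module ℂ (W i)]
    (n : ℕ)
    (B1 : ∀ i, V i →ₗ[ℂ] V (i + 1)) (B2 : ∀ i, V i →ₗ[ℂ] V i)
    (a : ∀ i, W i →ₗ[ℂ] V i) : Prop :=
  ∀ S : ∀ i, Submodule ℂ (V i),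
    (∀ i, 1 ≤ i → i ≤ n - 2 → (S i).map (B1 i) ≤ S (i + 1)) →
    (∀ i, 1 ≤ i → i ≤ n - 1 → (S i).map (B2 i) ≤ S i) →
    (∀ i, 1 ≤ i → i ≤ n - 1 → LinearMap.range (a i) ≤ S i) →
    ∀ i, 1 ≤ i → i ≤ n - 1 → S i = ⊤

/-- Costability of a handsaw quiver datum. -/
def IsCostable {V W : ℕ → Type*}
    [∀ i, AddCommGroup (V i)] [∀ i, Module ℂ (V i)]
    [∀ i, AddCommGroup (W i)] [∀ i, Module ℂ (W i)]
    (n : ℕ)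
    (B1 : ∀ i, V i →ₗ[ℂ] V (i + 1)) (B2 : ∀ i, V i →ₗ[ℂ] V i)
    (b : ∀ i, V i →ₗ[ℂ] W (i + 1)) : Prop :=
  ∀ S : ∀ i, Submodule ℂ (V i),
    (∀ i, 1 ≤ i → i ≤ n - 2 → (S i).map (B1 i) ≤ S (i + 1)) →
    (∀ i, 1 ≤ i → i ≤ n - 1 → (S i).map (B2 i) ≤ S i) →
    (∀ i, 1 ≤ i → i ≤ n - 1 → S i ≤ LinearMap.ker (b i)) →
    ∀ i, 1 ≤ i → i ≤ n - 1 → S i = ⊥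

/-!
Put `μ_i = B_{1,i} B_{2,i} − B_{2,i+1} B_{1,i} + a_{i+1} b_i`. On each `W_j` (`j ≤ i`) both
`α_{i+1}|_z ∘ β_i` and `B_{1,i} ∘ α_i|_z` restrict to `B_{1,i} ∘ ⋯ ∘ B_{1,j} ∘ a_j`, while on `V_i`
their difference is `(z B_{1,i} − B_{2,i+1} B_{1,i} + a_{i+1} b_i) − B_{1,i} (z − B_{2,i}) = μ_i`,
whatever `z` is. Hence `α_{i+1}|_z ∘ β_i = B_{1,i} ∘ α_i|_z + μ_i ∘ pr_{V_i}`, and since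
`pr_{V_i}` is surjective, the two sides agree iff `μ_i = 0`.
-/

section HandsawQuiver

variable {V W : ℕ → Type*}
    [∀ i, AddCommGroup (V i)] [∀ i, Module ℂ (V i)]
    [∀ i, AddCommGroup (W i)] [∀ i, Module ℂ (W i)]
    (B1 : ∀ i, V i →ₗ[ℂ] V (i + 1)) (B2 : ∀ i, V i →ₗ[ℂ] V i)
    (a : ∀ i, W i →ₗ[ℂ] V i) (b : ∀ i, V i →ₗ[ℂ] W (i + 1))

def momentMap (i : ℕ) : V i →ₗ[ℂ] V (i + 1) :=
  B1 i ∘ₗ B2 i - B2 (i + 1) ∘ₗ B1 i + a (i + 1) ∘ₗ b i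

theorem momentZero_iff_momentMap_eq_zero (n : ℕ) :
    MomentZero n B1 B2 a b ↔ ∀ i, 1 ≤ i → i ≤ n - 2 → momentMap B1 B2 a b i = 0 :=
  Iff.rfl

theorem AtoV_succ_self (i : ℕ) : AtoV B1 a (i + 1) (i + 1) = a (i + 1) := by
  rw [AtoV, dif_pos rfl, cast_eq]

theorem AtoV_succ_of_ne {i j : ℕ} (h : j ≠ i + 1) :
    AtoV B1 a (i + 1) j = B1 i ∘ₗ AtoV B1 a i j := by
  rw [AtoV, dif_neg h]

theorem alphaMap_apply (i : ℕ) (z : ℂ) (w : ∀ j : Fin i, W (j.val + 1)) (v : V i) :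
    alphaMap B1 B2 a i z (w, v) =
      ∑ j : Fin i, AtoV B1 a i (j.val + 1) (w j) + (z • v - B2 i v) := by
  simp [alphaMap, LinearMap.sum_apply]

theorem betaMap_apply_fst_castSucc (i : ℕ) (w : ∀ j : Fin i, W (j.val + 1)) (v : V i)
    (j : Fin i) : (betaMap B1 b i (w, v)).1 j.castSucc = w j := by
  simp only [betaMap, LinearMap.prod_apply, Function.prod, LinearMap.pi_apply, Fin.val_castSucc,
    dif_pos j.isLt]
  rfl

theorem betaMap_apply_fst_last (i : ℕ) (w : ∀ j : Fin i, W (j.val + 1)) (v : V i) :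
    (betaMap B1 b i (w, v)).1 (Fin.last i) = b i v := by
  simp only [betaMap, LinearMap.prod_apply, Function.prod, LinearMap.pi_apply, Fin.val_last,
    lt_irrefl, dif_neg, not_false_eq_true, cast_eq]
  rfl

theorem betaMap_apply_snd (i : ℕ) (w : ∀ j : Fin i, W (j.val + 1)) (v : V i) :
    (betaMap B1 b i (w, v)).2 = B1 i v :=
  rfl

theorem alphaMap_succ_comp_betaMap (i : ℕ) (z : ℂ) :
    alphaMap B1 B2 a (i + 1) z ∘ₗ betaMap B1 b i =
      B1 i ∘ₗ alphaMap B1 B2 a i z + momentMap B1 B2 a b i ∘ₗ LinearMap.snd ℂ _ _ := by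
  refine LinearMap.ext fun ⟨w, v⟩ => ?_
  have hw : ∀ j : Fin i, AtoV B1 a (i + 1) (j.val + 1) ((betaMap B1 b i (w, v)).1 j.castSucc) =
      B1 i (AtoV B1 a i (j.val + 1) (w j)) := fun j => by
    rw [betaMap_apply_fst_castSucc, AtoV_succ_of_ne B1 a (by omega), LinearMap.comp_apply]
  have hlast : AtoV B1 a (i + 1) (i + 1) ((betaMap B1 b i (w, v)).1 (Fin.last i)) =
      a (i + 1) (b i v) := by
    rw [AtoV_succ_self, betaMap_apply_fst_last]
  rw [LinearMap.comp_apply, ← Prod.mk.eta (p := betaMap B1 b i (w, v)), alphaMap_apply,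
    Fin.sum_univ_castSucc]
  simp only [Fin.val_castSucc, Fin.val_last, hw, hlast, betaMap_apply_snd, LinearMap.add_apply,
    LinearMap.comp_apply, alphaMap_apply, LinearMap.snd_apply, momentMap, LinearMap.sub_apply,
    map_add, map_sub, map_smul, map_sum]
  abel

theorem comp_alphaMap_eq_iff_momentMap_eq_zero (i : ℕ) :
    (∀ z : ℂ, B1 i ∘ₗ alphaMap B1 B2 a i z = alphaMap B1 B2 a (i + 1) z ∘ₗ betaMap B1 b i) ↔
      momentMap B1 B2 a b i = 0 := by
  simp only [alphaMap_succ_comp_betaMap, left_eq_add, forall_const]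
  rw [← LinearMap.zero_comp (LinearMap.snd ℂ _ _), LinearMap.cancel_right LinearMap.snd_surjective]

end HandsawQuiver

theorem moment_map_iff_alpha_beta_compatible_general (n : ℕ) (V W : ℕ → Type*)
    [∀ i, AddCommGroup (V i)] [∀ i, Module ℂ (V i)]
    [∀ i, AddCommGroup (W i)] [∀ i, Module ℂ (W i)]
    (B1 : ∀ i, V i →ₗ[ℂ] V (i + 1)) (B2 : ∀ i, V i →ₗ[ℂ] V i)
    (a : ∀ i, W i →ₗ[ℂ] V i) (b : ∀ i, V i →ₗ[ℂ] W (i + 1)) :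
    MomentZero n B1 B2 a b ↔
      ∀ i, 1 ≤ i → i ≤ n - 2 → ∀ z : ℂ,
        (B1 i) ∘ₗ (alphaMap B1 B2 a i z) =
          (alphaMap B1 B2 a (i + 1) z) ∘ₗ (betaMap B1 b i) := by
  simp only [momentZero_iff_momentMap_eq_zero, comp_alphaMap_eq_iff_momentMap_eq_zero]

theorem moment_map_iff_alpha_beta_compatible (n : ℕ) (hn : 2 ≤ n) (V W : ℕ → Type*)
    [∀ i, AddCommGroup (V i)] [∀ i, Module ℂ (V i)] [∀ i, FiniteDimensional ℂ (V i)]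
    [∀ i, AddCommGroup (W i)] [∀ i, Module ℂ (W i)] [∀ i, FiniteDimensional ℂ (W i)]
    (B1 : ∀ i, V i →ₗ[ℂ] V (i + 1)) (B2 : ∀ i, V i →ₗ[ℂ] V i)
    (a : ∀ i, W i →ₗ[ℂ] V i) (b : ∀ i, V i →ₗ[ℂ] W (i + 1)) :
    MomentZero n B1 B2 a b ↔
      ∀ i, 1 ≤ i → i ≤ n - 2 → ∀ z : ℂ,
        (B1 i) ∘ₗ (alphaMap B1 B2 a i z) =
          (alphaMap B1 B2 a (i + 1) z) ∘ₗ (betaMap B1 b i) :=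
  moment_map_iff_alpha_beta_compatible_general n V W B1 B2 a b

end
end

section
/- Let (B_1,B_2,a,b) be a handsaw quiver datum satisfying the moment map equation μ = 0. Then (B_1,B_2,a,b) is stable if and only if the linear map α_i|_z is surjective for every 1 ≤ i ≤ n−1 and every z ∈ ℂ. -/
noncomputable section

open LinearMap Module

/-! If `α_i|_z` is not surjective, a nonzero functional `φ` on `V_i` kills its range: `φ ∘ B_{2,i} = z φ`
and `φ` kills every chain `B_{1,i-1} ∘ ⋯ ∘ a_j`. Pulling `φ` back along the `B_1`-chains gives
functionals `ψ_k` on `V_k` (`k ≤ i`), and the moment map equation propagates `ψ_k ∘ B_{2,k} = z ψ_k`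
down to every `k`. The kernels of the `ψ_k` then satisfy the hypotheses of stability, which forces
`φ = 0`.

Conversely, for a family `S` as in the stability condition, the `W`-part of `α_i|_z` lands in `S_i`,
so surjectivity gives `S_i + im(z − B_{2,i}) = V_i` for every `z`: the map induced by
`z − B_{2,i}` on `V_i / S_i` is surjective, hence injective, for every `z`. Over `ℂ` an
endomorphism of a nonzero space has an eigenvalue, so `V_i / S_i = 0`. -/

section Chains

variable {V W : ℕ → Type*}
    [∀ i, AddCommGroup (V i)] [∀ i, Module ℂ (V i)]
    [∀ i, AddCommGroup (W i)] [∀ i, Module ℂ (W i)]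
    (B1 : ∀ i, V i →ₗ[ℂ] V (i + 1)) (B2 : ∀ i, V i →ₗ[ℂ] V i) (a : ∀ i, W i →ₗ[ℂ] V i)

theorem AtoV_self {k : ℕ} (hk : 1 ≤ k) : AtoV B1 a k k = a k := by
  obtain ⟨m, rfl⟩ := Nat.exists_eq_add_of_le' hk
  rw [AtoV, dif_pos rfl]
  rfl

theorem AtoV_succ {i j : ℕ} (hj : j ≠ i + 1) : AtoV B1 a (i + 1) j = B1 i ∘ₗ AtoV B1 a i j := by
  rw [AtoV, dif_neg hj]

theorem AtoV_eq_zero_of_lt {i j : ℕ} (hij : i < j) : AtoV B1 a i j = 0 := by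
  induction i with
  | zero => rfl
  | succ i ih => rw [AtoV_succ B1 a (by omega), ih (by omega), comp_zero]

/-- `B_{1,i-1} ∘ ⋯ ∘ B_{1,k} : V_k → V_i` for `1 ≤ k ≤ i`, and `0` for `k > i`. -/
def chainB1 (i k : ℕ) : V k →ₗ[ℂ] V i :=
  AtoV B1 (fun _ => LinearMap.id) i k

theorem chainB1_self {k : ℕ} (hk : 1 ≤ k) : chainB1 B1 k k = LinearMap.id :=
  AtoV_self B1 _ hk

theorem chainB1_eq_zero_of_lt {i k : ℕ} (hik : i < k) : chainB1 B1 i k = 0 :=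
  AtoV_eq_zero_of_lt B1 _ hik

theorem chainB1_comp_AtoV {i j k : ℕ} (hk : 1 ≤ k) (hjk : j ≤ k) (hki : k ≤ i) :
    chainB1 B1 i k ∘ₗ AtoV B1 a k j = AtoV B1 a i j := by
  induction i, hki using Nat.le_induction with
  | base => rw [chainB1_self B1 hk, id_comp]
  | succ i hki ih =>
    rw [chainB1, AtoV_succ B1 _ (by omega), comp_assoc, ← chainB1, ih, AtoV_succ B1 a (by omega)]

theorem chainB1_succ_comp {i k : ℕ} (hk : 1 ≤ k) (hki : k < i) :
    chainB1 B1 i (k + 1) ∘ₗ B1 k = chainB1 B1 i k := by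
  have hB1 : B1 k = AtoV B1 (fun _ => LinearMap.id) (k + 1) k := by
    rw [AtoV_succ B1 _ (by omega), AtoV_self B1 _ hk, comp_id]
  rw [hB1, chainB1_comp_AtoV B1 _ (by omega) k.le_succ hki, chainB1]

theorem range_AtoV_le {n : ℕ} {S : ∀ i, Submodule ℂ (V i)}
    (hB1 : ∀ i, 1 ≤ i → i ≤ n - 2 → (S i).map (B1 i) ≤ S (i + 1))
    (ha : ∀ i, 1 ≤ i → i ≤ n - 1 → range (a i) ≤ S i)
    {i j : ℕ} (hj : 1 ≤ j) (hji : j ≤ i) (hin : i ≤ n - 1) :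
    range (AtoV B1 a i j) ≤ S i := by
  induction i, hji using Nat.le_induction with
  | base => rw [AtoV_self B1 a hj]; exact ha j hj hin
  | succ i hji ih =>
    rw [AtoV_succ B1 a (by omega), range_comp]
    exact (Submodule.map_mono (ih (by omega))).trans (hB1 i (by omega) (by omega))

theorem range_alphaMap (i : ℕ) (z : ℂ) :
    range (alphaMap B1 B2 a i z) =
      (⨆ j : Fin i, range (AtoV B1 a i (j + 1))) ⊔ range (z • LinearMap.id - B2 i) := by
  rw [alphaMap, range_coprod]
  congr 1
  apply le_antisymm
  · rintro _ ⟨w, rfl⟩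
    simp only [LinearMap.sum_apply, comp_apply, proj_apply]
    exact Submodule.sum_mem _ fun j _ => Submodule.mem_iSup_of_mem j (mem_range_self _ _)
  · refine iSup_le fun j => ?_
    rintro _ ⟨w, rfl⟩
    refine ⟨Pi.single j w, ?_⟩
    simp only [LinearMap.sum_apply, comp_apply, proj_apply]
    rw [Finset.sum_eq_single j (fun x _ hx => by rw [Pi.single_eq_of_ne hx, map_zero])
      (by simp), Pi.single_eq_same]

end Chains

theorem Submodule.eq_top_of_forall_sup_range_eq_top {K E : Type*} [Field K] [IsAlgClosed K]
    [AddCommGroup E] [Module K E] [FiniteDimensional K E] {f : Module.End K E}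
    {S : Submodule K E} (hS : S.map f ≤ S) (h : ∀ z : K, S ⊔ range (z • LinearMap.id - f) = ⊤) :
    S = ⊤ := by
  by_contra hne
  have : Nontrivial (E ⧸ S) := Submodule.Quotient.nontrivial_iff.mpr hne
  let g : Module.End K (E ⧸ S) := S.mapQ S f (Submodule.map_le_iff_le_comap.mp hS)
  obtain ⟨z, hz⟩ := g.exists_eigenvalue
  obtain ⟨v, hv⟩ := hz.exists_hasEigenvector
  have hsurj : Function.Surjective (z • LinearMap.id - g : Module.End K (E ⧸ S)) := by
    have hcomap : S ≤ S.comap (z • LinearMap.id - f) := fun x hx =>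
      S.sub_mem (S.smul_mem z hx) (hS ⟨x, hx, rfl⟩)
    have hg : z • LinearMap.id - g = S.mapQ S (z • LinearMap.id - f) hcomap := by
      ext; simp [g]
    rw [← range_eq_top, hg, Submodule.range_mapQ, Submodule.map_mkQ_eq_top, h]
  have hv0 : (z • LinearMap.id - g : Module.End K (E ⧸ S)) v = 0 := by simp [hv.apply_eq_smul]
  exact hv.2 (LinearMap.injective_iff_surjective.mpr hsurj (hv0.trans (map_zero _).symm))

section Stability

variable {V W : ℕ → Type*}
    [∀ i, AddCommGroup (V i)] [∀ i, Module ℂ (V i)]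
    [∀ i, AddCommGroup (W i)] [∀ i, Module ℂ (W i)]
    {B1 : ∀ i, V i →ₗ[ℂ] V (i + 1)} {B2 : ∀ i, V i →ₗ[ℂ] V i}
    {a : ∀ i, W i →ₗ[ℂ] V i} {b : ∀ i, V i →ₗ[ℂ] W (i + 1)}
    {n i : ℕ} {z : ℂ} {φ : V i →ₗ[ℂ] ℂ}

theorem comp_chainB1_comp_B2 (hmu : MomentZero n B1 B2 a b) (hin : i ≤ n - 1)
    (hB2 : φ ∘ₗ B2 i = z • φ) (ha : ∀ j, 1 ≤ j → j ≤ i → φ ∘ₗ AtoV B1 a i j = 0)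
    {k : ℕ} (hk : 1 ≤ k) (hki : k ≤ i) :
    (φ ∘ₗ chainB1 B1 i k) ∘ₗ B2 k = z • (φ ∘ₗ chainB1 B1 i k) := by
  induction hki using Nat.decreasingInduction with
  | self => rw [chainB1_self B1 hk, comp_id, hB2]
  | of_succ k hki ih =>
    have hB1B2 : B1 k ∘ₗ B2 k = B2 (k + 1) ∘ₗ B1 k - a (k + 1) ∘ₗ b k := by
      linear_combination (norm := module) hmu k hk (by omega)
    have hψa : (φ ∘ₗ chainB1 B1 i (k + 1)) ∘ₗ a (k + 1) = 0 := by
      rw [comp_assoc, ← AtoV_self B1 a (by omega : 1 ≤ k + 1),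
        chainB1_comp_AtoV B1 a (by omega) le_rfl hki, ha _ (by omega) hki]
    have hψ : φ ∘ₗ chainB1 B1 i k = (φ ∘ₗ chainB1 B1 i (k + 1)) ∘ₗ B1 k := by
      rw [comp_assoc, chainB1_succ_comp B1 hk hki]
    calc (φ ∘ₗ chainB1 B1 i k) ∘ₗ B2 k
        = (φ ∘ₗ chainB1 B1 i (k + 1)) ∘ₗ (B1 k ∘ₗ B2 k) := by rw [hψ, comp_assoc]
      _ = ((φ ∘ₗ chainB1 B1 i (k + 1)) ∘ₗ B2 (k + 1)) ∘ₗ B1 k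
            - ((φ ∘ₗ chainB1 B1 i (k + 1)) ∘ₗ a (k + 1)) ∘ₗ b k := by
        rw [hB1B2, comp_sub]
        simp only [comp_assoc]
      _ = z • (φ ∘ₗ chainB1 B1 i k) := by
        rw [ih (by omega), hψa, zero_comp, sub_zero, smul_comp, hψ]

theorem IsStable.eq_zero_of_comp_B2_eq_smul (hst : IsStable n B1 B2 a)
    (hmu : MomentZero n B1 B2 a b) (hi : 1 ≤ i) (hin : i ≤ n - 1)
    (hB2 : φ ∘ₗ B2 i = z • φ) (ha : ∀ j, 1 ≤ j → j ≤ i → φ ∘ₗ AtoV B1 a i j = 0) : φ = 0 := by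
  have hS := hst (fun k => ker (φ ∘ₗ chainB1 B1 i k)) ?_ ?_ ?_ i hi hin
  · rwa [chainB1_self B1 hi, comp_id, ker_eq_top] at hS
  · intro k hk _
    rcases lt_or_ge k i with hki | hik
    · rw [Submodule.map_le_iff_le_comap, ← ker_comp, comp_assoc, chainB1_succ_comp B1 hk hki]
    · simp [chainB1_eq_zero_of_lt B1 (by omega : i < k + 1)]
  · intro k hk _
    rcases le_or_gt k i with hki | hik
    · rw [Submodule.map_le_iff_le_comap, ← ker_comp, comp_chainB1_comp_B2 hmu hin hB2 ha hk hki]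
      intro x hx
      rw [mem_ker] at hx ⊢
      rw [LinearMap.smul_apply, hx, smul_zero]
    · simp [chainB1_eq_zero_of_lt B1 hik]
  · intro k hk _
    rcases le_or_gt k i with hki | hik
    · rw [range_le_ker_iff, comp_assoc, ← AtoV_self B1 a hk, chainB1_comp_AtoV B1 a hk le_rfl hki,
        ha k hk hki]
    · simp [chainB1_eq_zero_of_lt B1 hik]

end Stability

theorem stable_iff_alpha_surjective_general (n : ℕ) (V W : ℕ → Type*)
    [∀ i, AddCommGroup (V i)] [∀ i, Module ℂ (V i)] [∀ i, FiniteDimensional ℂ (V i)]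
    [∀ i, AddCommGroup (W i)] [∀ i, Module ℂ (W i)]
    (B1 : ∀ i, V i →ₗ[ℂ] V (i + 1)) (B2 : ∀ i, V i →ₗ[ℂ] V i)
    (a : ∀ i, W i →ₗ[ℂ] V i) (b : ∀ i, V i →ₗ[ℂ] W (i + 1))
    (hmu : MomentZero n B1 B2 a b) :
    IsStable n B1 B2 a ↔
      ∀ i, 1 ≤ i → i ≤ n - 1 → ∀ z : ℂ,
        Function.Surjective (alphaMap B1 B2 a i z) := by
  simp_rw [← range_eq_top, range_alphaMap]
  constructor
  · intro hst i hi hin z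
    by_contra hne
    obtain ⟨φ, hφ, hle⟩ := Submodule.exists_le_ker_of_lt_top _ (lt_top_iff_ne_top.mpr hne)
    rw [sup_le_iff, iSup_le_iff] at hle
    refine hφ (hst.eq_zero_of_comp_B2_eq_smul hmu hi hin (z := z) ?_ fun j hj _ => ?_)
    · have hφB2 := range_le_ker_iff.mp hle.2
      rw [comp_sub, comp_smul, comp_id, sub_eq_zero] at hφB2
      exact hφB2.symm
    · obtain ⟨m, rfl⟩ := Nat.exists_eq_add_of_le' hj
      exact range_le_ker_iff.mp (hle.1 ⟨m, by omega⟩)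
  · intro hsurj S hB1 hB2 ha i hi hin
    refine Submodule.eq_top_of_forall_sup_range_eq_top (hB2 i hi hin) fun z => top_unique ?_
    rw [← hsurj i hi hin z]
    exact sup_le_sup_right (iSup_le fun j => range_AtoV_le B1 a hB1 ha (by omega) j.isLt hin) _

theorem stable_iff_alpha_surjective (n : ℕ) (hn : 2 ≤ n) (V W : ℕ → Type*)
    [∀ i, AddCommGroup (V i)] [∀ i, Module ℂ (V i)] [∀ i, FiniteDimensional ℂ (V i)]
    [∀ i, AddCommGroup (W i)] [∀ i, Module ℂ (W i)] [∀ i, FiniteDimensional ℂ (W i)]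
    (B1 : ∀ i, V i →ₗ[ℂ] V (i + 1)) (B2 : ∀ i, V i →ₗ[ℂ] V i)
    (a : ∀ i, W i →ₗ[ℂ] V i) (b : ∀ i, V i →ₗ[ℂ] W (i + 1))
    (hmu : MomentZero n B1 B2 a b) :
    IsStable n B1 B2 a ↔
      ∀ i, 1 ≤ i → i ≤ n - 1 → ∀ z : ℂ,
        Function.Surjective (alphaMap B1 B2 a i z) :=
  stable_iff_alpha_surjective_general n V W B1 B2 a b hmu

end
end

section
/- Let (B_1,B_2,a,b) be a stable handsaw quiver datum. If ξ = (ξ_i)_{1 ≤ i ≤ n−1} with ξ_i ∈ End(V_i) satisfies ξ_{i+1} ∘ B_{1,i} = B_{1,i} ∘ ξ_i, ξ_i ∘ B_{2,i} = B_{2,i} ∘ ξ_i, ξ_i ∘ a_i = 0, and b_i ∘ ξ_i = 0 for all i, then ξ_i = 0 for all i. (In other words, the map σ of the tangent complex is injective at a stable point.) -/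
noncomputable section

open LinearMap Module

theorem sigma_injective_at_stable_point (n : ℕ) (hn : 2 ≤ n) (V W : ℕ → Type*)
    [∀ i, AddCommGroup (V i)] [∀ i, Module ℂ (V i)] [∀ i, FiniteDimensional ℂ (V i)]
    [∀ i, AddCommGroup (W i)] [∀ i, Module ℂ (W i)] [∀ i, FiniteDimensional ℂ (W i)]
    (B1 : ∀ i, V i →ₗ[ℂ] V (i + 1)) (B2 : ∀ i, V i →ₗ[ℂ] V i)
    (a : ∀ i, W i →ₗ[ℂ] V i) (b : ∀ i, V i →ₗ[ℂ] W (i + 1))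
    (hstable : IsStable n B1 B2 a)
    (ξ : ∀ i, V i →ₗ[ℂ] V i)
    (h1 : ∀ i, 1 ≤ i → i ≤ n - 2 → (ξ (i + 1)) ∘ₗ (B1 i) = (B1 i) ∘ₗ (ξ i))
    (h2 : ∀ i, 1 ≤ i → i ≤ n - 1 → (ξ i) ∘ₗ (B2 i) = (B2 i) ∘ₗ (ξ i))
    (h3 : ∀ i, 1 ≤ i → i ≤ n - 1 → (ξ i) ∘ₗ (a i) = 0)
    (h4 : ∀ i, 1 ≤ i → i ≤ n - 1 → (b i) ∘ₗ (ξ i) = 0) :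
    ∀ i, 1 ≤ i → i ≤ n - 1 → ξ i = 0 := by
  have hker : ∀ i, 1 ≤ i → i ≤ n - 1 → LinearMap.ker (ξ i) = ⊤ := by
    apply hstable (fun i => LinearMap.ker (ξ i))
    · intro i hi1 hi2
      rintro x ⟨y, hy, rfl⟩
      have := congrArg (fun f => f y) (h1 i hi1 hi2)
      simp only [LinearMap.coe_comp, Function.comp_apply] at this
      simp only [LinearMap.mem_ker] at hy ⊢
      rw [this, hy, map_zero]
    · intro i hi1 hi2
      rintro x ⟨y, hy, rfl⟩
      have := congrArg (fun f => f y) (h2 i hi1 hi2)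
      simp only [LinearMap.coe_comp, Function.comp_apply] at this
      simp only [LinearMap.mem_ker] at hy ⊢
      rw [this, hy, map_zero]
    · intro i hi1 hi2
      rintro x ⟨y, rfl⟩
      have := congrArg (fun f => f y) (h3 i hi1 hi2)
      simpa using this
  intro i hi1 hi2
  ext x
  have : x ∈ LinearMap.ker (ξ i) := by rw [hker i hi1 hi2]; trivial
  simpa using this

end
end

section
/- Let (B_1,B_2,a,b) be a stable handsaw quiver datum. If g = (g_i)_{1 ≤ i ≤ n−1} with g_i : V_i → V_i linear satisfies g_{i+1} ∘ B_{1,i} = B_{1,i} ∘ g_i, g_i ∘ B_{2,i} = B_{2,i} ∘ g_i, g_i ∘ a_i = a_i, and b_i ∘ g_i = b_i for all i, then g_i = id_{V_i} for all i. (The action of the gauge group on the stable locus is free.) -/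
noncomputable section

open LinearMap Module

theorem gauge_group_acts_freely_on_stable_locus (n : ℕ) (hn : 2 ≤ n) (V W : ℕ → Type*)
    [∀ i, AddCommGroup (V i)] [∀ i, Module ℂ (V i)] [∀ i, FiniteDimensional ℂ (V i)]
    [∀ i, AddCommGroup (W i)] [∀ i, Module ℂ (W i)] [∀ i, FiniteDimensional ℂ (W i)]
    (B1 : ∀ i, V i →ₗ[ℂ] V (i + 1)) (B2 : ∀ i, V i →ₗ[ℂ] V i)
    (a : ∀ i, W i →ₗ[ℂ] V i) (b : ∀ i, V i →ₗ[ℂ] W (i + 1))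
    (hstable : IsStable n B1 B2 a)
    (g : ∀ i, V i →ₗ[ℂ] V i)
    (h1 : ∀ i, 1 ≤ i → i ≤ n - 2 → (g (i + 1)) ∘ₗ (B1 i) = (B1 i) ∘ₗ (g i))
    (h2 : ∀ i, 1 ≤ i → i ≤ n - 1 → (g i) ∘ₗ (B2 i) = (B2 i) ∘ₗ (g i))
    (h3 : ∀ i, 1 ≤ i → i ≤ n - 1 → (g i) ∘ₗ (a i) = a i)
    (h4 : ∀ i, 1 ≤ i → i ≤ n - 1 → (b i) ∘ₗ (g i) = b i) :
    ∀ i, 1 ≤ i → i ≤ n - 1 → g i = LinearMap.id := by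
  set S : ∀ i, Submodule ℂ (V i) := fun i => LinearMap.ker (g i - LinearMap.id) with hS
  have hmem : ∀ i (v : V i), v ∈ S i ↔ g i v = v := by
    intro i v
    simp [hS, LinearMap.mem_ker, sub_eq_zero]
  have key : ∀ i, 1 ≤ i → i ≤ n - 1 → S i = ⊤ := by
    apply hstable
    · intro i hi1 hi2
      rintro x ⟨v, hv, rfl⟩
      rw [hmem]
      have hv' := (hmem i v).mp hv
      have := congrFun (congrArg DFunLike.coe (h1 i hi1 hi2)) v
      simpa [hv'] using this
    · intro i hi1 hi2
      rintro x ⟨v, hv, rfl⟩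
      rw [hmem]
      have hv' := (hmem i v).mp hv
      have := congrFun (congrArg DFunLike.coe (h2 i hi1 hi2)) v
      simpa [hv'] using this
    · intro i hi1 hi2
      rintro x ⟨w, rfl⟩
      rw [hmem]
      exact congrFun (congrArg DFunLike.coe (h3 i hi1 hi2)) w
  intro i hi1 hi2
  ext v
  have : v ∈ S i := (key i hi1 hi2) ▸ Submodule.mem_top
  simpa using (hmem i v).mp this

end
end

section
/- Suppose the handsaw quiver datum (B¹_1,B¹_2,a¹,b¹) on (V¹,W) is stable, and ξ = (ξ_i : V²_i → V¹_i)_{1 ≤ i ≤ n−1} satisfies ξ_{i+1} ∘ B²_{1,i} = B¹_{1,i} ∘ ξ_i, ξ_i ∘ B²_{2,i} = B¹_{2,i} ∘ ξ_i, ξ_i ∘ a²_i = a¹_i, and b¹_i ∘ ξ_i = b²_i for all i. Then every ξ_i is surjective. -/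
noncomputable section

open LinearMap Module

theorem intertwiner_surjective_of_stable (n : ℕ) (hn : 2 ≤ n) (V1 V2 W : ℕ → Type*)
    [∀ i, AddCommGroup (V1 i)] [∀ i, Module ℂ (V1 i)] [∀ i, FiniteDimensional ℂ (V1 i)]
    [∀ i, AddCommGroup (V2 i)] [∀ i, Module ℂ (V2 i)] [∀ i, FiniteDimensional ℂ (V2 i)]
    [∀ i, AddCommGroup (W i)] [∀ i, Module ℂ (W i)] [∀ i, FiniteDimensional ℂ (W i)]
    (B11 : ∀ i, V1 i →ₗ[ℂ] V1 (i + 1)) (B21 : ∀ i, V1 i →ₗ[ℂ] V1 i)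
    (a1 : ∀ i, W i →ₗ[ℂ] V1 i) (b1 : ∀ i, V1 i →ₗ[ℂ] W (i + 1))
    (B12 : ∀ i, V2 i →ₗ[ℂ] V2 (i + 1)) (B22 : ∀ i, V2 i →ₗ[ℂ] V2 i)
    (a2 : ∀ i, W i →ₗ[ℂ] V2 i) (b2 : ∀ i, V2 i →ₗ[ℂ] W (i + 1))
    (hstable : IsStable n B11 B21 a1)
    (ξ : ∀ i, V2 i →ₗ[ℂ] V1 i)
    (h1 : ∀ i, 1 ≤ i → i ≤ n - 2 → (ξ (i + 1)) ∘ₗ (B12 i) = (B11 i) ∘ₗ (ξ i))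
    (h2 : ∀ i, 1 ≤ i → i ≤ n - 1 → (ξ i) ∘ₗ (B22 i) = (B21 i) ∘ₗ (ξ i))
    (h3 : ∀ i, 1 ≤ i → i ≤ n - 1 → (ξ i) ∘ₗ (a2 i) = a1 i)
    (h4 : ∀ i, 1 ≤ i → i ≤ n - 1 → (b1 i) ∘ₗ (ξ i) = b2 i) :
    ∀ i, 1 ≤ i → i ≤ n - 1 → Function.Surjective (ξ i) := by
  intro i hi1 hi2
  have key := hstable (fun i => LinearMap.range (ξ i))
    (fun i hi1 hi2 => by
      rintro x ⟨y, ⟨z, rfl⟩, rfl⟩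
      exact ⟨B12 i z, congrFun (congrArg DFunLike.coe (h1 i hi1 hi2)) z⟩)
    (fun i hi1 hi2 => by
      rintro x ⟨y, ⟨z, rfl⟩, rfl⟩
      exact ⟨B22 i z, congrFun (congrArg DFunLike.coe (h2 i hi1 hi2)) z⟩)
    (fun i hi1 hi2 => by
      rintro x ⟨w, rfl⟩
      exact ⟨a2 i w, congrFun (congrArg DFunLike.coe (h3 i hi1 hi2)) w⟩)
    i hi1 hi2
  rw [← LinearMap.range_eq_top]
  exact key

end
end

section
/- Suppose the handsaw quiver datum (B²_1,B²_2,a²,b²) on (V²,W) is stable. If ξ = (ξ_i : V²_i → V¹_i)_{1 ≤ i ≤ n−1} satisfies ξ_{i+1} ∘ B²_{1,i} = B¹_{1,i} ∘ ξ_i, ξ_i ∘ B²_{2,i} = B¹_{2,i} ∘ ξ_i, ξ_i ∘ a²_i = 0, and b¹_i ∘ ξ_i = 0 for all i, then ξ_i = 0 for all i. (The map σ of the Hecke-correspondence complex is injective.) -/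
noncomputable section

open LinearMap Module

theorem hecke_sigma_injective (n : ℕ) (hn : 2 ≤ n) (V1 V2 W : ℕ → Type*)
    [∀ i, AddCommGroup (V1 i)] [∀ i, Module ℂ (V1 i)] [∀ i, FiniteDimensional ℂ (V1 i)]
    [∀ i, AddCommGroup (V2 i)] [∀ i, Module ℂ (V2 i)] [∀ i, FiniteDimensional ℂ (V2 i)]
    [∀ i, AddCommGroup (W i)] [∀ i, Module ℂ (W i)] [∀ i, FiniteDimensional ℂ (W i)]
    (B11 : ∀ i, V1 i →ₗ[ℂ] V1 (i + 1)) (B21 : ∀ i, V1 i →ₗ[ℂ] V1 i)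
    (a1 : ∀ i, W i →ₗ[ℂ] V1 i) (b1 : ∀ i, V1 i →ₗ[ℂ] W (i + 1))
    (B12 : ∀ i, V2 i →ₗ[ℂ] V2 (i + 1)) (B22 : ∀ i, V2 i →ₗ[ℂ] V2 i)
    (a2 : ∀ i, W i →ₗ[ℂ] V2 i) (b2 : ∀ i, V2 i →ₗ[ℂ] W (i + 1))
    (hstable : IsStable n B12 B22 a2)
    (ξ : ∀ i, V2 i →ₗ[ℂ] V1 i)
    (h1 : ∀ i, 1 ≤ i → i ≤ n - 2 → (ξ (i + 1)) ∘ₗ (B12 i) = (B11 i) ∘ₗ (ξ i))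
    (h2 : ∀ i, 1 ≤ i → i ≤ n - 1 → (ξ i) ∘ₗ (B22 i) = (B21 i) ∘ₗ (ξ i))
    (h3 : ∀ i, 1 ≤ i → i ≤ n - 1 → (ξ i) ∘ₗ (a2 i) = 0)
    (h4 : ∀ i, 1 ≤ i → i ≤ n - 1 → (b1 i) ∘ₗ (ξ i) = 0) :
    ∀ i, 1 ≤ i → i ≤ n - 1 → ξ i = 0 := by
  have key := hstable (fun i => LinearMap.ker (ξ i))
    (fun i hi1 hi2 => by
      rintro x ⟨y, hy, rfl⟩
      have := congrFun (congrArg DFunLike.coe (h1 i hi1 hi2)) y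
      simp only [LinearMap.coe_comp, Function.comp_apply] at this
      simp only [LinearMap.mem_ker] at hy ⊢
      rw [this, hy, map_zero])
    (fun i hi1 hi2 => by
      rintro x ⟨y, hy, rfl⟩
      have := congrFun (congrArg DFunLike.coe (h2 i hi1 hi2)) y
      simp only [LinearMap.coe_comp, Function.comp_apply] at this
      simp only [LinearMap.mem_ker] at hy ⊢
      rw [this, hy, map_zero])
    (fun i hi1 hi2 => by
      rintro x ⟨y, rfl⟩
      have := congrFun (congrArg DFunLike.coe (h3 i hi1 hi2)) y
      simpa using this)
  intro i hi1 hi2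
  have := key i hi1 hi2
  ext x
  have hx : x ∈ LinearMap.ker (ξ i) := by
    have h : LinearMap.ker (ξ i) = ⊤ := this
    rw [h]; trivial
  simpa using hx

end
end

section
/- Let (B_1,B_2,a,b) be a stable handsaw quiver datum. Suppose ξ_i ∈ End(V_i) (1 ≤ i ≤ n−1) and s_i ∈ End(W_i) (1 ≤ i ≤ n) are diagonalizable linear maps satisfying ξ_{i+1} ∘ B_{1,i} = B_{1,i} ∘ ξ_i, B_{2,i} ∘ ξ_i − ξ_i ∘ B_{2,i} = B_{2,i}, ξ_i ∘ a_i = a_i ∘ s_i, and b_i ∘ ξ_i = (s_{i+1} + id) ∘ b_i for all i. If every eigenvalue of every s_i is an integer, then every eigenvalue of every ξ_i is an integer. -/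
noncomputable section

open LinearMap Module

theorem eigenvalues_of_fixed_point_are_integers (n : ℕ) (hn : 2 ≤ n) (V W : ℕ → Type*)
    [∀ i, AddCommGroup (V i)] [∀ i, Module ℂ (V i)] [∀ i, FiniteDimensional ℂ (V i)]
    [∀ i, AddCommGroup (W i)] [∀ i, Module ℂ (W i)] [∀ i, FiniteDimensional ℂ (W i)]
    (B1 : ∀ i, V i →ₗ[ℂ] V (i + 1)) (B2 : ∀ i, V i →ₗ[ℂ] V i)
    (a : ∀ i, W i →ₗ[ℂ] V i) (b : ∀ i, V i →ₗ[ℂ] W (i + 1))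
    (hstable : IsStable n B1 B2 a)
    (ξ : ∀ i, V i →ₗ[ℂ] V i) (s : ∀ i, W i →ₗ[ℂ] W i)
    (hξdiag : ∀ i, 1 ≤ i → i ≤ n - 1 →
      (⨆ μ : ℂ, Module.End.eigenspace (ξ i) μ) = ⊤)
    (hsdiag : ∀ i, 1 ≤ i → i ≤ n →
      (⨆ μ : ℂ, Module.End.eigenspace (s i) μ) = ⊤)
    (h1 : ∀ i, 1 ≤ i → i ≤ n - 2 → (ξ (i + 1)) ∘ₗ (B1 i) = (B1 i) ∘ₗ (ξ i))
    (h2 : ∀ i, 1 ≤ i → i ≤ n - 1 → (B2 i) ∘ₗ (ξ i) - (ξ i) ∘ₗ (B2 i) = B2 i)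
    (h3 : ∀ i, 1 ≤ i → i ≤ n - 1 → (ξ i) ∘ₗ (a i) = (a i) ∘ₗ (s i))
    (h4 : ∀ i, 1 ≤ i → i ≤ n - 1 →
      (b i) ∘ₗ (ξ i) = (s (i + 1) + LinearMap.id) ∘ₗ (b i))
    (hsint : ∀ i, 1 ≤ i → i ≤ n → ∀ μ : ℂ,
      Module.End.HasEigenvalue (s i) μ → ∃ m : ℤ, μ = (m : ℂ)) :
    ∀ i, 1 ≤ i → i ≤ n - 1 → ∀ μ : ℂ,
      Module.End.HasEigenvalue (ξ i) μ → ∃ m : ℤ, μ = (m : ℂ) := by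
  -- Define S i as the sum of eigenspaces of ξ i with integer eigenvalues.
  set S : ∀ i, Submodule ℂ (V i) :=
    fun i => ⨆ m : ℤ, Module.End.eigenspace (ξ i) (m : ℂ) with hS
  have hStop : ∀ i, 1 ≤ i → i ≤ n - 1 → S i = ⊤ := by
    apply hstable
    · -- B1 invariance
      intro i hi1 hi2
      rw [hS]
      rw [Submodule.map_iSup]
      apply iSup_le
      intro m
      refine le_trans ?_ (le_iSup (fun m : ℤ => Module.End.eigenspace (ξ (i+1)) (m : ℂ)) m)
      rintro x ⟨y, hy, rfl⟩
      simp only [SetLike.mem_coe, Module.End.mem_eigenspace_iff] at hy ⊢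
      have := congrArg (fun f => f y) (h1 i hi1 hi2)
      simp only [LinearMap.comp_apply] at this
      rw [this, hy, map_smul]
    · -- B2 invariance
      intro i hi1 hi2
      rw [hS]
      rw [Submodule.map_iSup]
      apply iSup_le
      intro m
      refine le_trans ?_ (le_iSup (fun m : ℤ => Module.End.eigenspace (ξ i) (m : ℂ)) (m - 1))
      rintro x ⟨y, hy, rfl⟩
      simp only [SetLike.mem_coe, Module.End.mem_eigenspace_iff] at hy ⊢
      have := congrArg (fun f => f y) (h2 i hi1 hi2)
      simp only [LinearMap.sub_apply, LinearMap.comp_apply] at this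
      rw [hy, map_smul] at this
      push_cast
      rw [sub_smul, one_smul]
      linear_combination (norm := module) -this
    · -- range a
      intro i hi1 hi2
      have hsd := hsdiag i hi1 (le_trans hi2 (Nat.sub_le n 1))
      rw [hS]
      rw [LinearMap.range_eq_map, ← hsd, Submodule.map_iSup]
      apply iSup_le
      intro μ
      by_cases hbot : Module.End.eigenspace (s i) μ = ⊥
      · rw [hbot, Submodule.map_bot]; exact bot_le
      · obtain ⟨m, rfl⟩ := hsint i hi1 (le_trans hi2 (Nat.sub_le n 1)) μ hbot
        refine le_trans ?_ (le_iSup (fun m : ℤ => Module.End.eigenspace (ξ i) (m : ℂ)) m)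
        rintro x ⟨y, hy, rfl⟩
        simp only [SetLike.mem_coe, Module.End.mem_eigenspace_iff] at hy ⊢
        have := congrArg (fun f => f y) (h3 i hi1 hi2)
        simp only [LinearMap.comp_apply] at this
        rw [this, hy, map_smul]
  intro i hi1 hi2 μ hμ
  by_contra hμint
  have hind := Module.End.eigenspaces_iSupIndep (ξ i)
  have hdisj := hind μ
  have hle : S i ≤ ⨆ ν, ⨆ _ : ν ≠ μ, Module.End.eigenspace (ξ i) ν := by
    rw [hS]
    apply iSup_le
    intro m
    have hne : (m : ℂ) ≠ μ := fun h => hμint ⟨m, h.symm⟩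
    exact le_iSup₂ (f := fun ν (_ : ν ≠ μ) => Module.End.eigenspace (ξ i) ν) (m : ℂ) hne
  have : Module.End.eigenspace (ξ i) μ = ⊥ := by
    have := hdisj.mono_right hle
    rw [hStop i hi1 hi2] at this
    simpa using this.eq_bot_of_le le_top
  exact hμ this
end
end
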